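/- arXiv:2006.01215 — 3 statements merged into one kernel-verified Lean document; each statement's English description precedes it below -/
import Mathlib

section
/- Let B be an n×n hermitian complex matrix (Bᴴ = B) that is block-diagonal with respect to f : Fin n → Fin ℓ. Then there exist a unitary matrix V (Vᴴ * V = 1) and a function g : Fin n → Fin ℓ such that: Vᴴ * B * V is a diagonal matrix; for each column index j, the j-th column of V is supported on block (g j); and for each k : Fin ℓ, the number of indices j with g j = k equals the number of indices i with f i = k. (Every hermitian block-diagonal matrix admits an orthonormal eigenbasis adapted to the blocks.) -/
/-!
Reindex `Fin n` by the fibres of `f`, i.e. along `Σ k, {i // f i = k} ≃ Fin n`. Since `B` has no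
entries across blocks, it becomes the block-diagonal matrix of its hermitian blocks `B_k`. The
spectral theorem diagonalises each `B_k` by a unitary `U_k`; the block-diagonal matrix of the `U_k`,
reindexed back, is the required `V`, and its `j`-th column lives in block `f j`, so `g = f`.
-/

open Matrix

namespace Matrix

variable {m n o α : Type*} [Fintype n] [DecidableEq n]

def IsUnitaryDiagonalizer [Semiring α] [StarRing α] (U A : Matrix n n α) : Prop :=
  Uᴴ * U = 1 ∧ (Uᴴ * A * U).IsDiag

theorem IsHermitian.exists_isUnitaryDiagonalizer {𝕜 : Type*} [RCLike 𝕜] {A : Matrix n n 𝕜}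
    (hA : A.IsHermitian) : ∃ U, IsUnitaryDiagonalizer U A := by
  refine ⟨hA.eigenvectorUnitary, mem_unitaryGroup_iff'.mp hA.eigenvectorUnitary.2, ?_⟩
  have hdiag := hA.conjStarAlgAut_star_eigenvectorUnitary
  simp only [Unitary.conjStarAlgAut_apply, Unitary.coe_star, star_eq_conjTranspose,
    conjTranspose_conjTranspose] at hdiag
  exact hdiag ▸ isDiag_diagonal _

theorem IsUnitaryDiagonalizer.submatrix [Fintype m] [DecidableEq m] [Semiring α] [StarRing α]
    {U A : Matrix n n α} (h : IsUnitaryDiagonalizer U A) (e : m ≃ n) :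
    IsUnitaryDiagonalizer (U.submatrix e e) (A.submatrix e e) := by
  constructor
  · rw [conjTranspose_submatrix, submatrix_mul_equiv, h.1, submatrix_one_equiv]
  · rw [conjTranspose_submatrix, submatrix_mul_equiv, submatrix_mul_equiv]
    exact h.2.submatrix e.injective

theorem IsDiag.blockDiagonal' [DecidableEq o] {m' : o → Type*} [Zero α]
    {A : ∀ k, Matrix (m' k) (m' k) α}
    (hA : ∀ k, (A k).IsDiag) : (blockDiagonal' A).IsDiag := by
  rintro ⟨k, i⟩ ⟨k', j⟩ hne
  by_cases hk : k = k'
  · subst hk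
    rw [blockDiagonal'_apply_eq]
    exact hA k fun hij => hne (congrArg (Sigma.mk k) hij)
  · exact blockDiagonal'_apply_ne A i j hk

theorem IsUnitaryDiagonalizer.blockDiagonal' [Fintype o] [DecidableEq o] {m' : o → Type*}
    [∀ k, Fintype (m' k)] [∀ k, DecidableEq (m' k)] [Semiring α] [StarRing α]
    {U A : ∀ k, Matrix (m' k) (m' k) α} (h : ∀ k, IsUnitaryDiagonalizer (U k) (A k)) :
    IsUnitaryDiagonalizer (blockDiagonal' U) (blockDiagonal' A) := by
  constructor
  · rw [blockDiagonal'_conjTranspose, ← blockDiagonal'_mul]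
    simp only [fun k => (h k).1]
    exact blockDiagonal'_one
  · rw [blockDiagonal'_conjTranspose, ← blockDiagonal'_mul, ← blockDiagonal'_mul]
    exact IsDiag.blockDiagonal' fun k => (h k).2

theorem submatrix_sigmaFiberEquiv_eq_blockDiagonal' [Zero α] {ι κ : Type*} [DecidableEq κ]
    (f : ι → κ) {A : Matrix ι ι α} (hA : ∀ i j, f i ≠ f j → A i j = 0) :
    A.submatrix (Equiv.sigmaFiberEquiv f) (Equiv.sigmaFiberEquiv f) =
      blockDiagonal' fun k => A.submatrix (Subtype.val : {i // f i = k} → ι) Subtype.val := by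
  ext ⟨k, i, hi⟩ ⟨k', j, hj⟩
  by_cases hk : k = k'
  · subst hk
    simp
  · rw [blockDiagonal'_apply_ne _ _ _ hk]
    exact hA i j (hi ▸ hj ▸ hk)

end Matrix

/-- Every hermitian block-diagonal matrix admits an orthonormal eigenbasis adapted to
the blocks. -/
theorem hermitian_blockDiag_adapted_eigenbasis
    {n ℓ : ℕ} (f : Fin n → Fin ℓ)
    (B : Matrix (Fin n) (Fin n) ℂ)
    (hherm : Bᴴ = B)
    (hB : ∀ i j, f i ≠ f j → B i j = 0) :
    ∃ (V : Matrix (Fin n) (Fin n) ℂ) (g : Fin n → Fin ℓ),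
      Vᴴ * V = 1 ∧
      (∀ i j, i ≠ j → (Vᴴ * B * V) i j = 0) ∧
      (∀ j i, f i ≠ g j → V i j = 0) ∧
      (∀ k : Fin ℓ,
        (Finset.univ.filter fun j => g j = k).card =
          (Finset.univ.filter fun i => f i = k).card) := by
  choose U hU using fun k => IsHermitian.exists_isUnitaryDiagonalizer <|
    IsHermitian.submatrix hherm (Subtype.val : {i // f i = k} → Fin n)
  have hV := (IsUnitaryDiagonalizer.blockDiagonal' hU).submatrix (Equiv.sigmaFiberEquiv f).symm
  rw [← submatrix_sigmaFiberEquiv_eq_blockDiagonal' f hB, submatrix_submatrix,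
    Equiv.self_comp_symm, submatrix_id_id] at hV
  exact ⟨_, f, hV.1, hV.2, fun j i hij => blockDiagonal'_apply_ne U _ _ hij, fun k => rfl⟩
end

section
/- Let B be an n×n complex matrix that is diagonalizable (there exists an invertible matrix P with P⁻¹ * B * P diagonal) and block-diagonal with respect to f : Fin n → Fin ℓ. Then there exist an invertible matrix W and a function g : Fin n → Fin ℓ such that: W⁻¹ * B * W is diagonal; for each column index j, the j-th column of W is supported on block (g j); and for each k : Fin ℓ, the number of indices j with g j = k equals the number of indices i with f i = k. (Every diagonalizable block-diagonal matrix admits an eigenbasis adapted to the blocks.) -/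
/-!
Diagonalizability of `B` says that its eigenspaces span `ℂⁿ`, and this passes to the restriction
of `B` to any invariant subspace, in particular to each block subspace. Each block subspace thus has
an eigenbasis, which can be indexed by the coordinates of that block; together these eigenbases
form an eigenbasis of `ℂⁿ` whose `j`-th vector is supported on block `f j`, so one may take
`g = f`.
-/

open Matrix Module End

section Endomorphism

variable {K V ι : Type*} [Field K] [AddCommGroup V] [Module K V]

theorem Module.End.exists_eigenbasis {φ : End K V}
    (h : ⨆ μ, φ.eigenspace μ = ⊤) (b : Basis ι K V) :
    ∃ c : Basis ι K V, ∀ i, ∃ μ : K, φ (c i) = μ • c i := by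
  have hs : ⊤ ≤ Submodule.span K (⋃ μ, (φ.eigenspace μ : Set V)) := by
    rw [← Submodule.iSup_eq_span, h]
  refine ⟨(Basis.ofSpan hs).reindex ((Basis.ofSpan hs).indexEquiv b), fun i => ?_⟩
  obtain ⟨μ, hμ⟩ := Set.mem_iUnion.mp (Basis.ofSpan_subset hs (Set.mem_range_self _))
  exact ⟨μ, by simpa [mem_eigenspace_iff] using hμ⟩

theorem Module.End.exists_eigenbasis_of_mapsTo [FiniteDimensional K V] {φ : End K V}
    (h : ⨆ μ, φ.eigenspace μ = ⊤) {p : Submodule K V} (hp : ∀ v ∈ p, φ v ∈ p)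
    (b : Basis ι K p) : ∃ c : Basis ι K p, ∀ i, ∃ μ : K, φ (c i) = μ • (c i : V) := by
  obtain ⟨c, hc⟩ := exists_eigenbasis (genEigenspace_restrict_eq_top hp h) b
  refine ⟨c, fun i => ?_⟩
  obtain ⟨μ, hμ⟩ := hc i
  exact ⟨μ, by simpa using congrArg Subtype.val hμ⟩

end Endomorphism

section BlockSubmodule

variable (K : Type*) {ι κ : Type*} [Field K] (f : ι → κ)

def blockSubmodule (k : κ) : Submodule K (ι → K) :=
  ⨅ i ∈ {i | f i ≠ k}, LinearMap.ker (LinearMap.proj i)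

variable {K f}

theorem mem_blockSubmodule {k : κ} {v : ι → K} :
    v ∈ blockSubmodule K f k ↔ ∀ i, f i ≠ k → v i = 0 := by
  simp [blockSubmodule]

variable (K f)

noncomputable def blockSubmoduleBasis [Fintype ι] [DecidableEq κ] (k : κ) :
    Basis {i // f i = k} K (blockSubmodule K f k) :=
  (Pi.basisFun K _).map (LinearMap.iInfKerProjEquiv K (fun _ => K) (I := {i | f i = k})
    (Set.disjoint_left.mpr fun _ (hi : f _ = k) (hi' : f _ ≠ k) => hi' hi)
    (fun i _ => em (f i = k))).symm

theorem iSup_blockSubmodule_eq_top [Fintype ι] [DecidableEq ι] :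
    ⨆ k, blockSubmodule K f k = ⊤ :=
  (Submodule.eq_top_iff_forall_basis_mem (Pi.basisFun K ι)).mpr fun i =>
    Submodule.mem_iSup_of_mem (f i) <| mem_blockSubmodule.mpr fun j hj => by
      rw [Pi.basisFun_apply]; exact Pi.single_eq_of_ne (fun h => hj (congrArg f h)) _

variable {K f}

theorem Matrix.mulVec_mem_blockSubmodule [Fintype ι] {A : Matrix ι ι K}
    (hA : ∀ i j, f i ≠ f j → A i j = 0) {k : κ} {v : ι → K}
    (hv : v ∈ blockSubmodule K f k) : A *ᵥ v ∈ blockSubmodule K f k := by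
  rw [mem_blockSubmodule] at hv ⊢
  intro i hi
  simp only [mulVec, dotProduct]
  refine Finset.sum_eq_zero fun j _ => ?_
  by_cases hj : f j = k
  · rw [hA i j (hj ▸ hi), zero_mul]
  · rw [hv j hj, mul_zero]

end BlockSubmodule

section BlockDiagonalMatrix

variable {K ι κ : Type*} [Field K] [Fintype ι] [DecidableEq ι]

theorem Matrix.iSup_eigenspace_toLin'_eq_top_of_isDiag {A P : Matrix ι ι K} (hP : IsUnit P)
    (hD : (P⁻¹ * A * P).IsDiag) : ⨆ μ, eigenspace (toLin' A) μ = ⊤ := by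
  have hAP : A * P = P * (P⁻¹ * A * P) := by
    rw [Matrix.mul_assoc, mul_nonsing_inv_cancel_left _ _ ((isUnit_iff_isUnit_det P).mp hP)]
  have hP_range : LinearMap.range (toLin' P) = ⊤ :=
    LinearMap.range_eq_top.mpr (mulVec_surjective_iff_isUnit.mpr hP)
  rw [eq_top_iff, ← hP_range, LinearMap.range_eq_map,
    ← iSup_eigenspace_toLin'_diagonal_eq_top (P⁻¹ * A * P).diag, hD.diagonal_diag,
    Submodule.map_iSup]
  refine iSup_mono fun μ => ?_
  rintro _ ⟨x, hx, rfl⟩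
  rw [SetLike.mem_coe, mem_eigenspace_iff, toLin'_apply] at hx
  rw [mem_eigenspace_iff, toLin'_apply, toLin'_apply, mulVec_mulVec, hAP, ← mulVec_mulVec, hx,
    mulVec_smul]

theorem Matrix.isDiag_inv_mul_mul_toMatrix {A : Matrix ι ι K} (c : Basis ι K (ι → K))
    (hc : ∀ j, ∃ μ : K, A *ᵥ c j = μ • c j) :
    (((Pi.basisFun K ι).toMatrix c)⁻¹ * A * (Pi.basisFun K ι).toMatrix c).IsDiag := by
  rw [inv_eq_left_inv (Basis.toMatrix_mul_toMatrix_flip c _), ← LinearMap.toMatrix'_toLin' A,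
    ← LinearMap.toMatrix_eq_toMatrix', basis_toMatrix_mul_linearMap_toMatrix_mul_basis_toMatrix]
  intro i j hij
  obtain ⟨μ, hμ⟩ := hc j
  rw [LinearMap.toMatrix_apply, toLin'_apply, hμ, map_smul, c.repr_self,
    Finsupp.smul_apply, Finsupp.single_eq_of_ne hij, smul_zero]

theorem Matrix.exists_eigenbasis_mem_blockSubmodule [DecidableEq κ] (f : ι → κ)
    {A : Matrix ι ι K} (hA : ⨆ μ, eigenspace (toLin' A) μ = ⊤)
    (hAf : ∀ i j, f i ≠ f j → A i j = 0) :
    ∃ c : Basis ι K (ι → K), ∀ j, (∃ μ : K, A *ᵥ c j = μ • c j) ∧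
      c j ∈ blockSubmodule K f (f j) := by
  choose d hd using fun k => exists_eigenbasis_of_mapsTo hA
    (fun v hv => mulVec_mem_blockSubmodule hAf hv) (blockSubmoduleBasis K f k)
  let c : ι → ι → K := fun i => d (f i) ⟨i, rfl⟩
  have hc : ⊤ ≤ Submodule.span K (Set.range c) := by
    rw [← iSup_blockSubmodule_eq_top K f, iSup_le_iff]
    intro k v hv
    have hv' := Submodule.mem_map_of_mem (f := (blockSubmodule K f k).subtype)
      ((d k).mem_span ⟨v, hv⟩)
    rw [Submodule.map_span, ← Set.range_comp] at hv'
    refine Submodule.span_mono ?_ hv'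
    rintro _ ⟨⟨i, rfl⟩, rfl⟩
    exact ⟨i, rfl⟩
  refine ⟨basisOfTopLeSpanOfCardEqFinrank c hc (by simp), fun j => ?_⟩
  rw [coe_basisOfTopLeSpanOfCardEqFinrank]
  exact ⟨hd (f j) ⟨j, rfl⟩, (d (f j) ⟨j, rfl⟩).2⟩

end BlockDiagonalMatrix

/-- Every diagonalizable block-diagonal matrix admits an eigenbasis adapted to the blocks. -/
theorem diagonalizable_blockDiag_adapted_eigenbasis
    {n ℓ : ℕ} (f : Fin n → Fin ℓ)
    (B : Matrix (Fin n) (Fin n) ℂ)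
    (hdiag : ∃ P : Matrix (Fin n) (Fin n) ℂ, IsUnit P ∧
      ∀ i j, i ≠ j → (P⁻¹ * B * P) i j = 0)
    (hB : ∀ i j, f i ≠ f j → B i j = 0) :
    ∃ (W : Matrix (Fin n) (Fin n) ℂ) (g : Fin n → Fin ℓ),
      IsUnit W ∧
      (∀ i j, i ≠ j → (W⁻¹ * B * W) i j = 0) ∧
      (∀ j i, f i ≠ g j → W i j = 0) ∧
      (∀ k : Fin ℓ,
        (Finset.univ.filter fun j => g j = k).card =
          (Finset.univ.filter fun i => f i = k).card) := by
  obtain ⟨P, hP, hPBP⟩ := hdiag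
  obtain ⟨c, hc⟩ := exists_eigenbasis_mem_blockSubmodule f
    (iSup_eigenspace_toLin'_eq_top_of_isDiag hP hPBP) hB
  have := (Pi.basisFun ℂ (Fin n)).invertibleToMatrix c
  refine ⟨(Pi.basisFun ℂ (Fin n)).toMatrix c, f, isUnit_of_invertible _,
    isDiag_inv_mul_mul_toMatrix c fun j => (hc j).1, fun j i hij => ?_, fun _ => rfl⟩
  rw [Basis.toMatrix_apply, Pi.basisFun_repr]
  exact mem_blockSubmodule.mp (hc j).2 i hij
end

section
/- (Theorem 1, existence form.) Let A : ℝ → Matrix (Fin n) (Fin n) ℂ be a matrix flow with each A t hermitian ((A t)ᴴ = A t), and suppose there exist a unitary matrix U (Uᴴ * U = 1) and f : Fin n → Fin ℓ such that U * (A t) * Uᴴ is block-diagonal with respect to f for every t : ℝ. Then for every t_a : ℝ there exist a unitary matrix V and a function g : Fin n → Fin ℓ such that Vᴴ * (A t_a) * V is diagonal, Vᴴ * (A t) * V is block-diagonal with respect to g for every t : ℝ, and for each k : Fin ℓ the number of indices j with g j = k equals the number of indices i with f i = k. (The columns of an eigenvector matrix of one flow matrix A(t_a) can be chosen so that the same constant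 unitary similarity block-diagonalizes every flow matrix A(t).) -/
/-!
A block-diagonal hermitian matrix is diagonalized by a unitary that is itself block-diagonal:
diagonalize each block separately. Apply this to `U * A t_a * Uᴴ` to get such a unitary `W`;
then `V = Uᴴ * W` diagonalizes `A t_a`, and since block-diagonal matrices are closed under
products and conjugate transposes, `Vᴴ * A t * V = Wᴴ * (U * A t * Uᴴ) * W` is still
block-diagonal with respect to the same `f`, so one can take `g = f`.
-/

open Matrix

namespace Matrix

variable {m ι α : Type*}

def IsBlockDiagonal [Zero α] (f : m → ι) (M : Matrix m m α) : Prop :=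
  ∀ i j, f i ≠ f j → M i j = 0

def fiberBlockDiagonal [DecidableEq ι] [Zero α] (f : m → ι)
    (M : ∀ k, Matrix {i // f i = k} {i // f i = k} α) : Matrix m m α :=
  (blockDiagonal' M).submatrix (Equiv.sigmaFiberEquiv f).symm (Equiv.sigmaFiberEquiv f).symm

section fiberBlockDiagonal

variable [DecidableEq ι] {f : m → ι} (M N : ∀ k, Matrix {i // f i = k} {i // f i = k} α)

theorem isBlockDiagonal_fiberBlockDiagonal [Zero α] :
    IsBlockDiagonal f (fiberBlockDiagonal f M) := fun _ _ hij =>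
  blockDiagonal'_apply_ne M _ _ hij

theorem fiberBlockDiagonal_apply_coe [Zero α] {k : ι} (a b : {i // f i = k}) :
    fiberBlockDiagonal f M a b = M k a b := by
  change blockDiagonal' M ((Equiv.sigmaFiberEquiv f).symm (Equiv.sigmaFiberEquiv f ⟨k, a⟩))
    ((Equiv.sigmaFiberEquiv f).symm (Equiv.sigmaFiberEquiv f ⟨k, b⟩)) = _
  rw [Equiv.symm_apply_apply, Equiv.symm_apply_apply, blockDiagonal'_apply_eq]

theorem fiberBlockDiagonal_conjTranspose [AddMonoid α] [StarAddMonoid α] :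
    (fiberBlockDiagonal f M)ᴴ = fiberBlockDiagonal f fun k => (M k)ᴴ := by
  rw [fiberBlockDiagonal, conjTranspose_submatrix, blockDiagonal'_conjTranspose]
  rfl

theorem fiberBlockDiagonal_mul [Fintype m] [Fintype ι] [NonUnitalNonAssocSemiring α] :
    fiberBlockDiagonal f (fun k => M k * N k) =
      fiberBlockDiagonal f M * fiberBlockDiagonal f N := by
  rw [fiberBlockDiagonal, fiberBlockDiagonal, fiberBlockDiagonal, submatrix_mul_equiv,
    blockDiagonal'_mul]

theorem fiberBlockDiagonal_one [DecidableEq m] [Zero α] [One α] :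
    fiberBlockDiagonal f (1 : ∀ k, Matrix {i // f i = k} {i // f i = k} α) = 1 := by
  rw [fiberBlockDiagonal, blockDiagonal'_one, submatrix_one_equiv]

theorem fiberBlockDiagonal_diagonal [DecidableEq m] [Zero α] (d : ∀ k, {i // f i = k} → α) :
    fiberBlockDiagonal f (fun k => diagonal (d k)) = diagonal fun i => d (f i) ⟨i, rfl⟩ := by
  rw [fiberBlockDiagonal, blockDiagonal'_diagonal, submatrix_diagonal_equiv]
  rfl

end fiberBlockDiagonal

namespace IsBlockDiagonal

variable {f : m → ι} {M N : Matrix m m α}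

theorem mul [Fintype m] [NonUnitalNonAssocSemiring α] (hM : IsBlockDiagonal f M)
    (hN : IsBlockDiagonal f N) : IsBlockDiagonal f (M * N) := fun i j hij =>
  Finset.sum_eq_zero fun x _ => by
    by_cases hx : f i = f x
    · simp only [hN x j (hx ▸ hij), mul_zero]
    · simp only [hM i x hx, zero_mul]

theorem conjTranspose [AddMonoid α] [StarAddMonoid α] (hM : IsBlockDiagonal f M) :
    IsBlockDiagonal f Mᴴ := fun i j hij => by
  rw [conjTranspose_apply, hM j i (Ne.symm hij), star_zero]

theorem eq_fiberBlockDiagonal [DecidableEq ι] [Zero α] (hM : IsBlockDiagonal f M) :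
    M = fiberBlockDiagonal f fun _ => M.submatrix (↑) (↑) := by
  ext i j
  by_cases hij : f i = f j
  · exact (fiberBlockDiagonal_apply_coe (fun _ => M.submatrix (↑) (↑))
      (⟨i, hij⟩ : {x // f x = f j}) ⟨j, rfl⟩).symm
  · exact (hM i j hij).trans (isBlockDiagonal_fiberBlockDiagonal _ i j hij).symm

end IsBlockDiagonal

theorem IsHermitian.exists_unitary_isBlockDiagonal_isDiag {𝕜 : Type*} [RCLike 𝕜] [Fintype m]
    [DecidableEq m] [Fintype ι] [DecidableEq ι] {f : m → ι} {B : Matrix m m 𝕜}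
    (hB : B.IsHermitian) (hBf : IsBlockDiagonal f B) :
    ∃ W : Matrix m m 𝕜, Wᴴ * W = 1 ∧ IsBlockDiagonal f W ∧ (Wᴴ * B * W).IsDiag := by
  have hBk (k : ι) : (B.submatrix ((↑) : {i // f i = k} → m) (↑)).IsHermitian := hB.submatrix _
  set Wb := fun k => ((hBk k).eigenvectorUnitary : Matrix {i // f i = k} {i // f i = k} 𝕜)
  have hWb_unitary (k : ι) : (Wb k)ᴴ * Wb k = 1 := Unitary.coe_star_mul_self _
  have hWb_diag (k : ι) : (Wb k)ᴴ * B.submatrix (↑) (↑) * Wb k =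
      diagonal (RCLike.ofReal ∘ (hBk k).eigenvalues) := by
    simpa [Unitary.conjStarAlgAut_star_apply, star_eq_conjTranspose] using
      (hBk k).conjStarAlgAut_star_eigenvectorUnitary
  refine ⟨fiberBlockDiagonal f Wb, ?_, isBlockDiagonal_fiberBlockDiagonal Wb, ?_⟩
  · rw [fiberBlockDiagonal_conjTranspose, ← fiberBlockDiagonal_mul]
    simp only [hWb_unitary]
    exact fiberBlockDiagonal_one
  · rw [fiberBlockDiagonal_conjTranspose, hBf.eq_fiberBlockDiagonal, ← fiberBlockDiagonal_mul,
      ← fiberBlockDiagonal_mul]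
    simp only [hWb_diag, fiberBlockDiagonal_diagonal]
    exact isDiag_diagonal _

end Matrix

/-- Theorem 1 (existence form): for a hermitian matrix flow that is uniformly
block-diagonalized by a constant unitary similarity, the eigenvector matrix of any one
flow matrix `A t_a` can be chosen so that the same constant unitary similarity
block-diagonalizes every flow matrix `A t`. -/
theorem hermitian_flow_eigenvector_blockDiagonalizes
    {n ℓ : ℕ} (A : ℝ → Matrix (Fin n) (Fin n) ℂ)
    (hherm : ∀ t, (A t)ᴴ = A t)
    (U : Matrix (Fin n) (Fin n) ℂ) (hU : Uᴴ * U = 1)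
    (f : Fin n → Fin ℓ)
    (hblock : ∀ t, ∀ i j, f i ≠ f j → (U * A t * Uᴴ) i j = 0)
    (t_a : ℝ) :
    ∃ (V : Matrix (Fin n) (Fin n) ℂ) (g : Fin n → Fin ℓ),
      Vᴴ * V = 1 ∧
      (∀ i j, i ≠ j → (Vᴴ * A t_a * V) i j = 0) ∧
      (∀ t, ∀ i j, g i ≠ g j → (Vᴴ * A t * V) i j = 0) ∧
      (∀ k : Fin ℓ,
        (Finset.univ.filter fun j => g j = k).card =
          (Finset.univ.filter fun i => f i = k).card) := by
  obtain ⟨W, hW, hWf, hdiag⟩ :=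
    (isHermitian_mul_mul_conjTranspose U (hherm t_a)).exists_unitary_isBlockDiagonal_isDiag
      (hblock t_a)
  have hconj (X : Matrix (Fin n) (Fin n) ℂ) :
      (Uᴴ * W)ᴴ * X * (Uᴴ * W) = Wᴴ * (U * X * Uᴴ) * W := by
    simp only [conjTranspose_mul, conjTranspose_conjTranspose, Matrix.mul_assoc]
  refine ⟨Uᴴ * W, f, ?_, ?_, fun t => ?_, fun _ => rfl⟩
  · rw [← Matrix.mul_one (Uᴴ * W)ᴴ, hconj, Matrix.mul_one, mul_eq_one_comm.mp hU,
      Matrix.mul_one, hW]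
  · rw [hconj]
    exact hdiag
  · rw [hconj]
    exact (hWf.conjTranspose.mul (hblock t)).mul hWf
end
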